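/- Let E be a type of entities, e_q ∈ E a query entity, S ⊆ E a set (the semantic neighbors of e_q) with e_q ∉ S, d a positive natural number, and r_q, v_a ∈ ℝ^d vectors such that r_q ≠ v_a and every coordinate of r_q and of v_a is nonzero. Define Init²(e_q, e_v, r_q) = 1[e_v = e_q]·r_q + 1[e_v ∈ S]·v_a for each e_v ∈ E. Then Init² satisfies target node distinguishability: for every e_v ∈ E with e_v ≠ e_q, we have Init²(e_q, e_q, r_q) ≠ Init²(e_q, e_v, r_q). -/

import Mathlib

open scoped Classical

/-- The semantic-injected initialization function
`Init²(e_q, e_v, r_q) = 1[e_v = e_q]·r_q + 1[e_v ∈ S]·v_a`. -/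
noncomputable def Init2 {E : Type*} {d : ℕ} (e_q : E) (S : Set E)
    (r_q v_a : Fin d → ℝ) (e_v : E) : Fin d → ℝ :=
  (if e_v = e_q then r_q else 0) + (if e_v ∈ S then v_a else 0)

section Init2

variable {E : Type*} {d : ℕ} {e_q e_v : E} {S : Set E} {r_q v_a : Fin d → ℝ}

theorem init2_self (hS : e_q ∉ S) : Init2 e_q S r_q v_a e_q = r_q := by
  simp [Init2, hS]

theorem init2_of_ne (h : e_v ≠ e_q) :
    Init2 e_q S r_q v_a e_v = if e_v ∈ S then v_a else 0 := by
  simp [Init2, h]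

end Init2

theorem init2_target_node_distinguishability_general {E : Type*} (e_q : E) (S : Set E)
    (hS : e_q ∉ S) (d : ℕ) (hd : 0 < d) (r_q v_a : Fin d → ℝ)
    (hne : r_q ≠ v_a) (hr : ∀ i : Fin d, r_q i ≠ 0) :
    ∀ e_v : E, e_v ≠ e_q →
      Init2 e_q S r_q v_a e_q ≠ Init2 e_q S r_q v_a e_v := by
  intro e_v hvq
  rw [init2_self hS, init2_of_ne hvq]
  split_ifs
  · exact hne
  · exact Function.ne_iff.mpr ⟨⟨0, hd⟩, hr _⟩

theorem init2_target_node_distinguishability {E : Type*} (e_q : E) (S : Set E)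
    (hS : e_q ∉ S) (d : ℕ) (hd : 0 < d) (r_q v_a : Fin d → ℝ)
    (hne : r_q ≠ v_a) (hr : ∀ i : Fin d, r_q i ≠ 0)
    (hv : ∀ i : Fin d, v_a i ≠ 0) :
    ∀ e_v : E, e_v ≠ e_q →
      Init2 e_q S r_q v_a e_q ≠ Init2 e_q S r_q v_a e_v :=
  init2_target_node_distinguishability_general e_q S hS d hd r_q v_a hne hr
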